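/- arXiv:1806.01641 — 2 statements merged into one kernel-verified Lean document; each statement's English description precedes it below -/
import Mathlib

section
/- For every u in the open interval (1/√3, √3), the identity ψ₁(u) + ψ₂(u) = 3 holds (equivalently, 4 − ψ₁(u) − ψ₂(u) = 1). -/
noncomputable def mParam (u : ℝ) : ℝ :=
  (8 * u ^ 3 - u ^ 3 * (1 + u ^ 2) ^ ((3 : ℝ) / 2)) /
    (8 * u ^ 3 - (1 + u ^ 2) ^ ((3 : ℝ) / 2))

noncomputable def alphaParam (u : ℝ) : ℝ :=
  Real.sqrt (2 * mParam u * u ^ 2 + 2)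

noncomputable def muParam (u : ℝ) : ℝ :=
  4 * mParam u * alphaParam u / Real.sqrt (1 + u ^ 2) +
    alphaParam u * (mParam u) ^ 2 / (2 * u) + alphaParam u / 2

noncomputable def phi1 (u : ℝ) : ℝ :=
  1 + 2 * (mParam u + 1) * (alphaParam u) ^ 3 * (2 - u ^ 2) /
    (muParam u * (1 + u ^ 2) ^ ((5 : ℝ) / 2))

noncomputable def phi2 (u : ℝ) : ℝ :=
  1 + 2 * (mParam u + 1) * (alphaParam u) ^ 3 * (2 * u ^ 2 - 1) /
    (muParam u * (1 + u ^ 2) ^ ((5 : ℝ) / 2))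

noncomputable def psi1 (u : ℝ) : ℝ :=
  1 + (4 * alphaParam u / muParam u) *
    ((2 * (mParam u) ^ 2 * u ^ 4 + (6 * mParam u - (mParam u) ^ 2 - 1) * u ^ 2 + 2) /
        (1 + u ^ 2) ^ ((5 : ℝ) / 2) -
      mParam u * u ^ 2 / 8 - mParam u / (8 * u ^ 3))

noncomputable def psi2 (u : ℝ) : ℝ :=
  1 + (4 * alphaParam u / muParam u) *
    ((-(mParam u) ^ 2 * u ^ 4 + (2 * (mParam u) ^ 2 - 6 * mParam u + 2) * u ^ 2 - 1) /
        (1 + u ^ 2) ^ ((5 : ℝ) / 2) +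
      mParam u * u ^ 2 / 4 + mParam u / (4 * u ^ 3))

/-!
Put `t = √(1 + u²)`, so that `(1 + u²)^(3/2) = t³` and `(1 + u²)^(5/2) = t⁵`. The definition of
`m` is the relation `m (8u³ - t³) = u³ (8 - t³)`; modulo it and `t² = 1 + u²`, four times the sum of
the brackets in `ψ₁` and `ψ₂` is `4m/t + m²/(2u) + 1/2 = μ/α`, so `ψ₁ + ψ₂ = 2 + 1`. For
`1/√3 < u < √3` one has `t < 2u` and `t < 2`, which make `m`, hence `α` and `μ`, positive.
-/

open Real

theorem psi_bracket_sum_eq {m u t : ℝ} (hu : u ≠ 0) (ht : t ≠ 0) (ht2 : t ^ 2 = 1 + u ^ 2)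
    (hm : m * (8 * u ^ 3 - t ^ 3) = u ^ 3 * (8 - t ^ 3)) :
    4 * ((2 * m ^ 2 * u ^ 4 + (6 * m - m ^ 2 - 1) * u ^ 2 + 2) / t ^ 5
        - m * u ^ 2 / 8 - m / (8 * u ^ 3)) +
      4 * ((-m ^ 2 * u ^ 4 + (2 * m ^ 2 - 6 * m + 2) * u ^ 2 - 1) / t ^ 5
        + m * u ^ 2 / 4 + m / (4 * u ^ 3)) =
    4 * m / t + m ^ 2 / (2 * u) + 1 / 2 := by
  field_simp
  linear_combination
    8 * t ^ 2 * ((m * u ^ 2 - 1) * hm - 8 * m * u ^ 3 * ht2) -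
      64 * u ^ 3 * (1 + m ^ 2 * u ^ 2) * ht2

theorem one_add_sq_rpow_three_halves (u : ℝ) :
    (1 + u ^ 2) ^ ((3 : ℝ) / 2) = √(1 + u ^ 2) ^ 3 := by
  rw [rpow_div_two_eq_sqrt _ (by positivity)]
  norm_cast

theorem one_add_sq_rpow_five_halves (u : ℝ) :
    (1 + u ^ 2) ^ ((5 : ℝ) / 2) = √(1 + u ^ 2) ^ 5 := by
  rw [rpow_div_two_eq_sqrt _ (by positivity)]
  norm_cast

theorem sqrt_one_add_sq_pow_three_lt_eight_mul {u : ℝ} (hu0 : 0 < u) (hu : 1 < 3 * u ^ 2) :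
    √(1 + u ^ 2) ^ 3 < 8 * u ^ 3 := by
  have ht : √(1 + u ^ 2) < 2 * u := (sqrt_lt' (by positivity)).2 (by nlinarith)
  calc √(1 + u ^ 2) ^ 3 < (2 * u) ^ 3 := by gcongr
    _ = 8 * u ^ 3 := by ring

theorem sqrt_one_add_sq_pow_three_lt_eight {u : ℝ} (hu : u ^ 2 < 3) : √(1 + u ^ 2) ^ 3 < 8 := by
  have ht : √(1 + u ^ 2) < 2 := (sqrt_lt' two_pos).2 (by nlinarith)
  calc √(1 + u ^ 2) ^ 3 < 2 ^ 3 := by gcongr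
    _ = 8 := by norm_num

theorem mParam_mul_eq {u : ℝ} (hu0 : 0 < u) (hu : 1 < 3 * u ^ 2) :
    mParam u * (8 * u ^ 3 - √(1 + u ^ 2) ^ 3) = u ^ 3 * (8 - √(1 + u ^ 2) ^ 3) := by
  have hden := sqrt_one_add_sq_pow_three_lt_eight_mul hu0 hu
  rw [mParam, one_add_sq_rpow_three_halves, div_mul_cancel₀ _ (by linarith)]
  ring

theorem mParam_pos {u : ℝ} (hu0 : 0 < u) (hu : 1 < 3 * u ^ 2) (hu' : u ^ 2 < 3) : 0 < mParam u := by
  have hden := sqrt_one_add_sq_pow_three_lt_eight_mul hu0 hu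
  have hnum := sqrt_one_add_sq_pow_three_lt_eight hu'
  rw [mParam, one_add_sq_rpow_three_halves]
  exact div_pos (by nlinarith [pow_pos hu0 3]) (by linarith)

theorem alphaParam_pos {u : ℝ} (hm : 0 ≤ mParam u) : 0 < alphaParam u :=
  sqrt_pos.2 (by positivity)

theorem muParam_eq (u : ℝ) :
    muParam u =
      alphaParam u * (4 * mParam u / √(1 + u ^ 2) + mParam u ^ 2 / (2 * u) + 1 / 2) := by
  rw [muParam]
  ring

theorem muParam_pos {u : ℝ} (hu0 : 0 < u) (hm : 0 < mParam u) : 0 < muParam u := by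
  have := alphaParam_pos hm.le
  rw [muParam_eq]
  positivity

/-- For every `u ∈ (1/√3, √3)`, `ψ₁(u) + ψ₂(u) = 3`. -/
theorem psi_sum_eq_three (u : ℝ) (hu1 : 1 / Real.sqrt 3 < u) (hu2 : u < Real.sqrt 3) :
    psi1 u + psi2 u = 3 := by
  have hu0 : 0 < u := lt_trans (by positivity) hu1
  have hu_low : 1 < 3 * u ^ 2 := by
    rw [div_lt_iff₀ (by positivity)] at hu1
    nlinarith [sq_sqrt (show (0 : ℝ) ≤ 3 by norm_num)]
  have hu_high : u ^ 2 < 3 := (lt_sqrt hu0.le).1 hu2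
  have hbrackets := psi_bracket_sum_eq hu0.ne' (sqrt_pos.2 (by positivity)).ne'
    (sq_sqrt (by positivity)) (mParam_mul_eq hu0 hu_low)
  have hμ := muParam_pos hu0 (mParam_pos hu0 hu_low hu_high)
  rw [psi1, psi2, one_add_sq_rpow_five_halves]
  linear_combination (norm := field_simp)
    alphaParam u / muParam u * hbrackets - muParam_eq u / muParam u
  ring
end

section
/- (Proposition 2.6, key conjugation identity.) Let J₄ = diag(J₂, J₂) with J₂ = [[0,−1],[1,0]], and for u ∈ (1/√3, √3), e ∈ [0,1) and t ∈ ℝ let B₁(u,e,t) be the 4×4 real block matrix [[I₂, −J₂],[J₂, I₂ − K(u,e,t)]] where K(u,e,t) = (1/(1+e·cos t))·diag(φ₁(u), φ₂(u)). Then J₄⁻¹·B₁(u,e,t)·J₄ = B₁(1/u,e,t) for all t; consequently, if γ : ℝ → M₄(ℝ) satisfies γ(0) = I₄ and γ′(t) = J·B₁(u,e,t)·γ(t) for all t (J the standard 4×4 symplectic matrix), then the function t ↦ J₄⁻¹·γ(t)·J₄ takes the value I₄ at t = 0 and satisfies the same differential equation with u replaced by 1/u. -/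
def Jstd : Matrix (Fin 4) (Fin 4) ℝ :=
  !![0, 0, -1, 0; 0, 0, 0, -1; 1, 0, 0, 0; 0, 1, 0, 0]

def J4blk : Matrix (Fin 4) (Fin 4) ℝ :=
  !![0, -1, 0, 0; 1, 0, 0, 0; 0, 0, 0, -1; 0, 0, 1, 0]

/-- The matrix `B₁(u,e,t) = [[I₂, −J₂],[J₂, I₂ − K(u,e,t)]]` with
`K(u,e,t) = (1/(1+e·cos t))·diag(φ₁(u), φ₂(u))`. -/
noncomputable def B1mat (u e t : ℝ) : Matrix (Fin 4) (Fin 4) ℝ :=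
  !![1, 0, 0, 1;
     0, 1, -1, 0;
     0, -1, 1 - phi1 u / (1 + e * Real.cos t), 0;
     1, 0, 0, 1 - phi2 u / (1 + e * Real.cos t)]

/-!
Conjugation by `J₄ = diag(J₂, J₂)` fixes the off-diagonal blocks `∓J₂` of `B₁` and swaps the two
diagonal entries of `K`, so the identity amounts to `φ₁(1/u) = φ₂(u)` and `φ₂(1/u) = φ₁(u)`.
Writing `φ₁ = 1 + w·(2 − u²)` and `φ₂ = 1 + w·(2u² − 1)`, both say `w(1/u) = u²·w(u)`. Once `α` is
cancelled from `α³/μ`, `w` is a rational function of `u`, `m` and `s = √(1+u²)`, and the substitution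
`u ↦ 1/u` acts as `m ↦ 1/m`, `s ↦ s/u`; this needs `m > 0`, which holds because
`s < 2` and `s < 2u` on `(1/√3, √3)`. Since `J₄` commutes with `J`, the conjugate `J₄⁻¹ γ J₄` of a
solution then solves the system with `B₁(1/u, e, t)`.
-/

lemma one_add_sq_rpow_div_two (u : ℝ) (n : ℕ) [n.AtLeastTwo] :
    (1 + u ^ 2) ^ ((OfNat.ofNat n : ℝ) / 2) = √(1 + u ^ 2) ^ (OfNat.ofNat n : ℕ) := by
  rw [Real.rpow_div_two_eq_sqrt _ (by positivity), Real.rpow_ofNat]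

lemma sqrt_one_add_one_div_sq {u : ℝ} (hu : 0 < u) :
    √(1 + (1 / u) ^ 2) = √(1 + u ^ 2) / u := by
  rw [Real.sqrt_eq_iff_mul_self_eq_of_pos (by positivity), div_mul_div_comm,
    Real.mul_self_sqrt (by positivity)]
  field_simp
  ring

lemma mParam_eq (u : ℝ) :
    mParam u = u ^ 3 * (8 - √(1 + u ^ 2) ^ 3) / (8 * u ^ 3 - √(1 + u ^ 2) ^ 3) := by
  rw [mParam, one_add_sq_rpow_div_two u 3]
  ring

lemma mParam_one_div {u : ℝ} (hu : 0 < u) : mParam (1 / u) = (mParam u)⁻¹ := by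
  rw [mParam_eq, mParam_eq, sqrt_one_add_one_div_sq hu, inv_div]
  field_simp

lemma mParam_pos_s14 {u : ℝ} (hu1 : 1 / √3 < u) (hu2 : u < √3) : 0 < mParam u := by
  have hu : 0 < u := lt_trans (by positivity) hu1
  have h3 : √3 ^ 2 = 3 := Real.sq_sqrt (by norm_num)
  have hlt : u ^ 2 < 3 := by nlinarith [Real.sqrt_nonneg 3]
  have hgt : 1 < 3 * u ^ 2 := by
    rw [div_lt_iff₀ (by positivity)] at hu1
    nlinarith
  set s := √(1 + u ^ 2)
  have hs : 0 < s := by positivity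
  have hs2 : s ^ 2 = 1 + u ^ 2 := Real.sq_sqrt (by positivity)
  have hs_lt_two : s < 2 := by nlinarith
  have hs_lt_two_mul : s < 2 * u := by nlinarith
  have hcube : s ^ 3 < 2 ^ 3 := pow_lt_pow_left₀ hs_lt_two hs.le (by norm_num)
  have hcube' : s ^ 3 < (2 * u) ^ 3 := pow_lt_pow_left₀ hs_lt_two_mul hs.le (by norm_num)
  rw [mParam_eq]
  exact div_pos (mul_pos (by positivity) (by linarith)) (by linarith)

noncomputable def phiWeight (u : ℝ) : ℝ :=
  2 * (mParam u + 1) * alphaParam u ^ 3 / (muParam u * (1 + u ^ 2) ^ ((5 : ℝ) / 2))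

lemma phi1_eq (u : ℝ) : phi1 u = 1 + phiWeight u * (2 - u ^ 2) := by
  rw [phi1, phiWeight]
  ring

lemma phi2_eq (u : ℝ) : phi2 u = 1 + phiWeight u * (2 * u ^ 2 - 1) := by
  rw [phi2, phiWeight]
  ring

lemma phiWeight_eq {u : ℝ} (hu : 0 < u) (hm : 0 < mParam u) :
    phiWeight u = 8 * u * (mParam u + 1) * (mParam u * u ^ 2 + 1) /
      ((8 * mParam u * u + (mParam u ^ 2 + u) * √(1 + u ^ 2)) * √(1 + u ^ 2) ^ 4) := by
  have hα : alphaParam u ^ 2 = 2 * mParam u * u ^ 2 + 2 := Real.sq_sqrt (by positivity)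
  have hα0 : 0 < alphaParam u := Real.sqrt_pos.mpr (by positivity)
  have hs : 0 < √(1 + u ^ 2) := by positivity
  rw [phiWeight, muParam, one_add_sq_rpow_div_two u 5, pow_succ (alphaParam u), hα]
  field_simp
  ring

lemma phiWeight_one_div {u : ℝ} (hu : 0 < u) (hm : 0 < mParam u) :
    phiWeight (1 / u) = u ^ 2 * phiWeight u := by
  have hm' : 0 < mParam (1 / u) := by rw [mParam_one_div hu]; positivity
  have hs : 0 < √(1 + u ^ 2) := by positivity
  rw [phiWeight_eq (by positivity) hm', phiWeight_eq hu hm, mParam_one_div hu,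
    sqrt_one_add_one_div_sq hu]
  field_simp
  ring

lemma phi1_one_div {u : ℝ} (hu : 0 < u) (hm : 0 < mParam u) : phi1 (1 / u) = phi2 u := by
  rw [phi1_eq, phi2_eq, phiWeight_one_div hu hm]
  field_simp

lemma phi2_one_div {u : ℝ} (hu : 0 < u) (hm : 0 < mParam u) : phi2 (1 / u) = phi1 u := by
  rw [phi2_eq, phi1_eq, phiWeight_one_div hu hm]
  field_simp

section ConjugatedODE

variable {𝕜 : Type*} [NontriviallyNormedField 𝕜] {n : Type*} [Fintype n]

theorem Matrix.hasDerivAt_mul_mul_apply {m p q : Type*} [Fintype p] (L : Matrix m n 𝕜)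
    (R : Matrix p q 𝕜) {γ : 𝕜 → Matrix n p 𝕜} {γ' : Matrix n p 𝕜} {t : 𝕜}
    (hγ : ∀ i j, HasDerivAt (fun s => γ s i j) (γ' i j) t) (i : m) (j : q) :
    HasDerivAt (fun s => (L * γ s * R) i j) ((L * γ' * R) i j) t := by
  simp only [Matrix.mul_apply]
  exact .fun_sum fun l _ => (HasDerivAt.fun_sum fun k _ => (hγ k l).const_mul _).mul_const _

theorem Matrix.hasDerivAt_conj_of_linearODE [DecidableEq n] {S A P Q : Matrix n n 𝕜}
    (hPQ : P * Q = 1) (hSQ : Commute S Q) {γ : 𝕜 → Matrix n n 𝕜} {t : 𝕜}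
    (hγ : ∀ i j, HasDerivAt (fun s => γ s i j) ((S * A * γ t) i j) t) (i j : n) :
    HasDerivAt (fun s => (Q * γ s * P) i j) ((S * (Q * A * P) * (Q * γ t * P)) i j) t := by
  have hrhs : S * (Q * A * P) * (Q * γ t * P) = Q * (S * A * γ t) * P := by
    calc S * (Q * A * P) * (Q * γ t * P) = S * Q * A * (P * Q) * γ t * P := by
          simp only [Matrix.mul_assoc]
      _ = Q * (S * A * γ t) * P := by
          rw [hPQ, Matrix.mul_one, hSQ.eq]
          simp only [Matrix.mul_assoc]
  rw [hrhs]
  exact Matrix.hasDerivAt_mul_mul_apply Q P hγ i j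

end ConjugatedODE

lemma J4blk_mul_neg_J4blk : J4blk * -J4blk = 1 := by
  ext i j
  fin_cases i <;> fin_cases j <;> simp [J4blk, Matrix.mul_apply, Fin.sum_univ_four]

lemma J4blk_inv : J4blk⁻¹ = -J4blk := Matrix.inv_eq_right_inv J4blk_mul_neg_J4blk

lemma J4blk_mul_inv : J4blk * J4blk⁻¹ = 1 := J4blk_inv ▸ J4blk_mul_neg_J4blk

lemma J4blk_inv_mul : J4blk⁻¹ * J4blk = 1 := mul_eq_one_comm.mp J4blk_mul_inv

lemma commute_Jstd_J4blk_inv : Commute Jstd J4blk⁻¹ := by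
  rw [J4blk_inv]
  refine Commute.neg_right ?_
  ext i j
  fin_cases i <;> fin_cases j <;> simp [Jstd, J4blk, Matrix.mul_apply, Fin.sum_univ_four]

lemma J4blk_conj_B1mat {u v : ℝ} (h1 : phi1 v = phi2 u) (h2 : phi2 v = phi1 u) (e t : ℝ) :
    J4blk⁻¹ * B1mat u e t * J4blk = B1mat v e t := by
  rw [J4blk_inv]
  ext i j
  fin_cases i <;> fin_cases j <;>
    simp [B1mat, J4blk, Matrix.mul_apply, Fin.sum_univ_four, h1, h2]

theorem conjugation_identity_general (u e : ℝ) (hu1 : 1 / Real.sqrt 3 < u)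
    (hu2 : u < Real.sqrt 3) :
    (∀ t : ℝ, J4blk⁻¹ * B1mat u e t * J4blk = B1mat (1 / u) e t) ∧
    (∀ γ : ℝ → Matrix (Fin 4) (Fin 4) ℝ,
      γ 0 = 1 →
      (∀ t (i j : Fin 4), HasDerivAt (fun s => γ s i j)
          ((Jstd * B1mat u e t * γ t) i j) t) →
      (J4blk⁻¹ * γ 0 * J4blk = 1 ∧
        ∀ t (i j : Fin 4), HasDerivAt (fun s => (J4blk⁻¹ * γ s * J4blk) i j)
          ((Jstd * B1mat (1 / u) e t * (J4blk⁻¹ * γ t * J4blk)) i j) t)) := by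
  have hu : 0 < u := lt_trans (by positivity) hu1
  have hm := mParam_pos_s14 hu1 hu2
  have hconj := J4blk_conj_B1mat (phi1_one_div hu hm) (phi2_one_div hu hm) e
  refine ⟨hconj, fun γ hγ0 hγ => ⟨?_, fun t i j => ?_⟩⟩
  · rw [hγ0, Matrix.mul_one, J4blk_inv_mul]
  · rw [← hconj t]
    exact Matrix.hasDerivAt_conj_of_linearODE J4blk_mul_inv commute_Jstd_J4blk_inv (hγ t) i j

/-- Proposition 2.6, key conjugation identity: `J₄⁻¹ B₁(u,e,t) J₄ = B₁(1/u,e,t)`,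
and hence the conjugated fundamental solution solves the system with `u` replaced
by `1/u`. -/
theorem conjugation_identity (u e : ℝ) (hu1 : 1 / Real.sqrt 3 < u)
    (hu2 : u < Real.sqrt 3) (he0 : 0 ≤ e) (he1 : e < 1) :
    (∀ t : ℝ, J4blk⁻¹ * B1mat u e t * J4blk = B1mat (1 / u) e t) ∧
    (∀ γ : ℝ → Matrix (Fin 4) (Fin 4) ℝ,
      γ 0 = 1 →
      (∀ t (i j : Fin 4), HasDerivAt (fun s => γ s i j)
          ((Jstd * B1mat u e t * γ t) i j) t) →
      (J4blk⁻¹ * γ 0 * J4blk = 1 ∧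
        ∀ t (i j : Fin 4), HasDerivAt (fun s => (J4blk⁻¹ * γ s * J4blk) i j)
          ((Jstd * B1mat (1 / u) e t * (J4blk⁻¹ * γ t * J4blk)) i j) t)) :=
  conjugation_identity_general u e hu1 hu2
end
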